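/- Let Z be a real-valued function on the set of quantum states on ℂ^d satisfying bounded concavity: for every finite probability distribution λ = (λ_k) and states ρ_k, one has 0 ≤ Z(∑_k λ_k ρ_k) − ∑_k λ_k Z(ρ_k) ≤ H(λ). Let κ = sup over pairs of states (μ,ν) of |Z(μ) − Z(ν)|, and assume κ < ∞. Then for all quantum states ρ, σ and all ε ≥ 0 with (1/2)‖ρ − σ‖₁ ≤ ε, one has |Z(ρ) − Z(σ)| ≤ g(ε) + ε·κ. -/

import Mathlib

open scoped BigOperators ComplexOrder Classical

noncomputable section

/-- Shannon entropy of a finitely supported distribution, with `0 log 0 = 0`. -/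
def shannonEntropy {ι : Type*} [Fintype ι] (p : ι → ℝ) : ℝ :=
  -∑ i, p i * Real.log (p i)

/-- A quantum state: positive semidefinite with unit trace. -/
def IsState {n : Type*} [Fintype n] (ρ : Matrix n n ℂ) : Prop :=
  ρ.PosSemidef ∧ ρ.trace = 1

/-- A POVM: positive semidefinite elements summing to the identity. -/
def IsPOVM {ι n : Type*} [Fintype ι] [Fintype n] [DecidableEq n]
    (M : ι → Matrix n n ℂ) : Prop :=
  (∀ i, (M i).PosSemidef) ∧ ∑ i, M i = 1

/-- Observational entropy `S_M(ρ) = -∑ p_i log (p_i / V_i)`. -/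
def obsEntropy {ι n : Type*} [Fintype ι] [Fintype n]
    (M : ι → Matrix n n ℂ) (ρ : Matrix n n ℂ) : ℝ :=
  -∑ i, ((M i * ρ).trace.re * Real.log ((M i * ρ).trace.re / (M i).trace.re))

/-- The function `g(x) = -x log x + (1+x) log(1+x)`. -/
def gFun (x : ℝ) : ℝ := -(x * Real.log x) + (1 + x) * Real.log (1 + x)

/-- Square root of a positive semidefinite matrix (Mathlib's former `Matrix.PosSemidef.sqrt`). -/
def Matrix.PosSemidef.sqrt {n : Type*} [Fintype n] [DecidableEq n] {A : Matrix n n ℂ}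
    (hA : A.PosSemidef) : Matrix n n ℂ :=
  (hA.1.eigenvectorUnitary : Matrix n n ℂ) *
    Matrix.diagonal ((↑) ∘ Real.sqrt ∘ hA.1.eigenvalues) *
    (star (hA.1.eigenvectorUnitary : Matrix n n ℂ))

/-- Trace norm of a square complex matrix. -/
def traceNorm {n : Type*} [Fintype n] [DecidableEq n] (X : Matrix n n ℂ) : ℝ :=
  ((Matrix.posSemidef_conjTranspose_mul_self X).sqrt).trace.re

/-- Matrix logarithm of a Hermitian matrix via the spectral decomposition,
with the convention `log 0 = 0` on the kernel; junk value `0` on non-Hermitian input. -/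
def matLog {n : Type*} [Fintype n] [DecidableEq n] (A : Matrix n n ℂ) : Matrix n n ℂ :=
  if hA : A.IsHermitian then
    (hA.eigenvectorUnitary : Matrix n n ℂ) *
      Matrix.diagonal (fun i => (Real.log (hA.eigenvalues i) : ℂ)) *
      (star (hA.eigenvectorUnitary : Matrix n n ℂ))
  else 0

/-- Von Neumann entropy `S(ρ) = -tr(ρ log ρ)`. -/
def vnEntropy {n : Type*} [Fintype n] [DecidableEq n] (ρ : Matrix n n ℂ) : ℝ :=
  -((ρ * matLog ρ).trace.re)

/-- Quantum relative entropy, as an extended real number: `tr(μ (log μ - log ν))` when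
`supp μ ⊆ supp ν` (both Hermitian), and `+∞` otherwise. -/
def qRelEntropy {n : Type*} [Fintype n] [DecidableEq n] (μ ν : Matrix n n ℂ) : EReal :=
  if μ.IsHermitian ∧ ν.IsHermitian ∧
      LinearMap.range (Matrix.toLin' μ) ≤ LinearMap.range (Matrix.toLin' ν) then
    (((μ * (matLog μ - matLog ν)).trace.re : ℝ) : EReal)
  else ⊤

/-- Real-valued quantum relative entropy `tr(μ (log μ - log ν))` (meaningful when
`supp μ ⊆ supp ν`). -/
def qRelEntropyR {n : Type*} [Fintype n] [DecidableEq n] (μ ν : Matrix n n ℂ) : ℝ :=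
  (μ * (matLog μ - matLog ν)).trace.re

/-!
Write `ρ - σ = P - N` with `P, N ≥ 0` the positive and negative parts, so that
`tr P = tr N = t := ‖ρ - σ‖₁ / 2`. With the states `ω₊ = P / t` and `ω₋ = N / t`,
`ρ + t ω₋ = σ + t ω₊`, so `(ρ + t ω₋) / (1 + t)` is one state presented as two binary
mixtures. Bounded concavity, applied to both, gives
`|Z ρ - Z σ| ≤ (1 + t) H(1/(1+t), t/(1+t)) + t |Z ω₊ - Z ω₋|`,
and the entropy term is exactly `g(t)`. Monotonicity of `g` then replaces `t` by `ε`.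
-/

open scoped MatrixOrder

theorem Matrix.PosSemidef.sqrt_eq_cfcSqrt {n : Type*} [Fintype n] [DecidableEq n]
    {A : Matrix n n ℂ} (hA : A.PosSemidef) : hA.sqrt = CFC.sqrt A := by
  rw [CFC.sqrt_eq_real_sqrt A hA.nonneg, cfcₙ_eq_cfc, hA.1.cfc_eq, Matrix.IsHermitian.cfc,
    Unitary.conjStarAlgAut_apply]
  rfl

theorem traceNorm_eq_re_trace_abs {n : Type*} [Fintype n] [DecidableEq n] (X : Matrix n n ℂ) :
    traceNorm X = (CFC.abs X).trace.re := by
  rw [traceNorm, Matrix.PosSemidef.sqrt_eq_cfcSqrt, CFC.abs, Matrix.star_eq_conjTranspose]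

theorem Matrix.IsHermitian.exists_posSemidef_sub_eq_and_traceNorm_eq {n : Type*} [Fintype n]
    [DecidableEq n] {X : Matrix n n ℂ} (hX : X.IsHermitian) :
    ∃ P N : Matrix n n ℂ, P.PosSemidef ∧ N.PosSemidef ∧ X = P - N ∧
      traceNorm X = (P.trace + N.trace).re := by
  refine ⟨X⁺, X⁻, Matrix.nonneg_iff_posSemidef.mp (CFC.posPart_nonneg X),
    Matrix.nonneg_iff_posSemidef.mp (CFC.negPart_nonneg X),
    (CFC.posPart_sub_negPart X hX.isSelfAdjoint).symm, ?_⟩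
  rw [traceNorm_eq_re_trace_abs, ← CFC.posPart_add_negPart X hX.isSelfAdjoint, Matrix.trace_add]

theorem traceNorm_nonneg {n : Type*} [Fintype n] [DecidableEq n] (X : Matrix n n ℂ) :
    0 ≤ traceNorm X := by
  rw [traceNorm_eq_re_trace_abs]
  exact (Complex.nonneg_iff.mp (Matrix.nonneg_iff_posSemidef.mp (CFC.abs_nonneg X)).trace_nonneg).1

theorem Matrix.PosSemidef.isState_inv_smul {n : Type*} [Fintype n] {P : Matrix n n ℂ}
    (hP : P.PosSemidef) {t : ℝ} (ht : 0 < t) (htr : P.trace = t) : IsState (t⁻¹ • P) :=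
  ⟨hP.smul (inv_nonneg.mpr ht.le), by
    rw [Matrix.trace_smul, htr, Complex.real_smul, ← Complex.ofReal_mul, inv_mul_cancel₀ ht.ne',
      Complex.ofReal_one]⟩

theorem IsState.exists_add_smul_eq {n : Type*} [Fintype n] [DecidableEq n]
    {ρ σ : Matrix n n ℂ} (hρ : IsState ρ) (hσ : IsState σ) :
    ∃ ωp ωm : Matrix n n ℂ, IsState ωp ∧ IsState ωm ∧
      ρ + (traceNorm (ρ - σ) / 2) • ωm = σ + (traceNorm (ρ - σ) / 2) • ωp := by
  obtain ⟨P, N, hP, hN, hX, htn⟩ :=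
    (hρ.1.1.sub hσ.1.1).exists_posSemidef_sub_eq_and_traceNorm_eq
  have htrPN : P.trace = N.trace := by
    rw [← sub_eq_zero, ← Matrix.trace_sub, ← hX, Matrix.trace_sub, hρ.2, hσ.2, sub_self]
  set t := traceNorm (ρ - σ) / 2
  have htP : P.trace = t := by
    rw [Complex.eq_re_of_ofReal_le hP.trace_nonneg]
    simp only [t, htn, ← htrPN, Complex.add_re]
    ring_nf
  have hPN : ρ + N = σ + P := by
    rw [add_comm σ]
    exact sub_eq_sub_iff_add_eq_add.mp hX
  have ht0 : 0 ≤ t := div_nonneg (traceNorm_nonneg (ρ - σ)) zero_le_two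
  rcases ht0.eq_or_lt with ht | ht
  · have hP0 : P = 0 := hP.trace_eq_zero_iff.mp (by rw [htP, ← ht, Complex.ofReal_zero])
    have hN0 : N = 0 :=
      hN.trace_eq_zero_iff.mp (by rw [← htrPN, htP, ← ht, Complex.ofReal_zero])
    rw [hP0, hN0, add_zero, add_zero] at hPN
    exact ⟨σ, σ, hσ, hσ, by rw [hPN]⟩
  · refine ⟨t⁻¹ • P, t⁻¹ • N, hP.isState_inv_smul ht htP,
      hN.isState_inv_smul ht (htrPN ▸ htP), ?_⟩
    rw [smul_inv_smul₀ ht.ne', smul_inv_smul₀ ht.ne', hPN]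

theorem gFun_hasDerivAt {x : ℝ} (hx : 0 < x) :
    HasDerivAt gFun (Real.log (1 + x) - Real.log x) x := by
  have hlin : HasDerivAt (fun y : ℝ => 1 + y) 1 x := (hasDerivAt_id x).const_add 1
  have h := (Real.hasDerivAt_mul_log hx.ne').neg.add
    ((Real.hasDerivAt_mul_log (by linarith : 1 + x ≠ 0)).comp x hlin)
  exact h.congr_deriv (by ring)

theorem continuous_gFun : Continuous gFun :=
  Real.continuous_mul_log.neg.add (Real.continuous_mul_log.comp (continuous_const_add 1))

theorem gFun_monotoneOn : MonotoneOn gFun (Set.Ici 0) := by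
  refine monotoneOn_of_deriv_nonneg (convex_Ici 0) continuous_gFun.continuousOn
    (fun x hx => ?_) (fun x hx => ?_) <;> rw [interior_Ici] at hx
  · exact (gFun_hasDerivAt hx).differentiableAt.differentiableWithinAt
  · rw [(gFun_hasDerivAt hx).deriv, sub_nonneg]
    exact Real.log_le_log hx (by linarith [Set.mem_Ioi.mp hx])

theorem gFun_eq_mul_shannonEntropy {t : ℝ} (ht : 0 ≤ t) :
    gFun t = (1 + t) * shannonEntropy ![(1 + t)⁻¹, t * (1 + t)⁻¹] := by
  rcases ht.eq_or_lt with rfl | ht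
  · simp [gFun, shannonEntropy]
  have h1t : (1 + t) ≠ 0 := by positivity
  rw [shannonEntropy, Fin.sum_univ_two, Matrix.cons_val_zero, Matrix.cons_val_one,
    Matrix.cons_val_zero, Real.log_mul ht.ne' (inv_ne_zero h1t), Real.log_inv, gFun]
  field_simp
  ring

section BoundedConcavity

variable {E : Type*} [AddCommGroup E] [Module ℝ E]

def IsBoundedConcaveOn (S : Set E) (Z : E → ℝ) : Prop :=
  ∀ a b : ℝ, 0 ≤ a → 0 ≤ b → a + b = 1 → ∀ x ∈ S, ∀ y ∈ S,
    a * Z x + b * Z y ≤ Z (a • x + b • y) ∧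
      Z (a • x + b • y) ≤ a * Z x + b * Z y + shannonEntropy ![a, b]

variable {S : Set E} {Z : E → ℝ}

theorem IsBoundedConcaveOn.of_sum
    (hZ : ∀ (K : ℕ) (lam : Fin K → ℝ) (xs : Fin K → E),
      (∀ k, 0 ≤ lam k) → ∑ k, lam k = 1 → (∀ k, xs k ∈ S) →
      0 ≤ Z (∑ k, lam k • xs k) - ∑ k, lam k * Z (xs k) ∧
        Z (∑ k, lam k • xs k) - ∑ k, lam k * Z (xs k) ≤ shannonEntropy lam) :
    IsBoundedConcaveOn S Z := by
  intro a b ha hb hab x hx y hy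
  have h := hZ 2 ![a, b] ![x, y] (Fin.forall_fin_two.mpr ⟨ha, hb⟩) (by simpa using hab)
    (Fin.forall_fin_two.mpr ⟨hx, hy⟩)
  simp only [Fin.sum_univ_two, Matrix.cons_val_zero, Matrix.cons_val_one] at h
  constructor <;> linarith [h.1, h.2]

theorem IsBoundedConcaveOn.sub_le_gFun_add_mul (hZ : IsBoundedConcaveOn S Z) {x y u v : E}
    (hx : x ∈ S) (hy : y ∈ S) (hu : u ∈ S) (hv : v ∈ S) {t : ℝ} (ht : 0 ≤ t)
    (h : x + t • v = y + t • u) :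
    Z x - Z y ≤ gFun t + t * (Z u - Z v) := by
  have h1t : 0 < 1 + t := by linarith
  set a := (1 + t)⁻¹
  have ha : 0 ≤ a := by positivity
  have hta : (1 + t) * a = 1 := mul_inv_cancel₀ h1t.ne'
  have hab : a + t * a = 1 := by linear_combination hta
  have hmix : a • x + (t * a) • v = a • y + (t * a) • u := by
    rw [mul_comm, ← smul_smul, ← smul_smul, ← smul_add, ← smul_add, h]
  have hlow := (hZ a (t * a) ha (by positivity) hab x hx v hv).1
  have hupp := (hZ a (t * a) ha (by positivity) hab y hy u hu).2
  -- One point, two mixtures: bound `Z` there from below via `x, v` and from above via `y, u`.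
  rw [hmix] at hlow
  have hdiff : a * (Z x - Z y - t * (Z u - Z v)) ≤ shannonEntropy ![a, t * a] := by
    linear_combination hlow + hupp
  calc Z x - Z y = (1 + t) * (a * (Z x - Z y - t * (Z u - Z v))) + t * (Z u - Z v) := by
        linear_combination (-(Z x - Z y - t * (Z u - Z v))) * hta
    _ ≤ (1 + t) * shannonEntropy ![a, t * a] + t * (Z u - Z v) := by gcongr
    _ = gFun t + t * (Z u - Z v) := by rw [gFun_eq_mul_shannonEntropy ht, mul_comm t a]

theorem IsBoundedConcaveOn.abs_sub_le_gFun_add_mul (hZ : IsBoundedConcaveOn S Z)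
    {x y u v : E} (hx : x ∈ S) (hy : y ∈ S) (hu : u ∈ S) (hv : v ∈ S) {t : ℝ}
    (ht : 0 ≤ t) (h : x + t • v = y + t • u) :
    |Z x - Z y| ≤ gFun t + t * |Z u - Z v| := by
  refine abs_sub_le_iff.mpr ⟨(hZ.sub_le_gFun_add_mul hx hy hu hv ht h).trans ?_,
    (hZ.sub_le_gFun_add_mul hy hx hv hu ht h.symm).trans ?_⟩
  · gcongr
    exact le_abs_self _
  · rw [abs_sub_comm]
    gcongr
    exact le_abs_self _

end BoundedConcavity

theorem continuity_general {d : ℕ} (Z : Matrix (Fin d) (Fin d) ℂ → ℝ)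
    (hZ : ∀ (K : ℕ) (lam : Fin K → ℝ) (ρs : Fin K → Matrix (Fin d) (Fin d) ℂ),
      (∀ k, 0 ≤ lam k) → ∑ k, lam k = 1 → (∀ k, IsState (ρs k)) →
      0 ≤ Z (∑ k, lam k • ρs k) - ∑ k, lam k * Z (ρs k) ∧
        Z (∑ k, lam k • ρs k) - ∑ k, lam k * Z (ρs k) ≤ shannonEntropy lam)
    (hbdd : BddAbove {x : ℝ | ∃ μ ν, IsState μ ∧ IsState ν ∧ x = |Z μ - Z ν|})
    (ρ σ : Matrix (Fin d) (Fin d) ℂ) (hρ : IsState ρ) (hσ : IsState σ)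
    (ε : ℝ) (hε0 : 0 ≤ ε) (hε : (1/2) * traceNorm (ρ - σ) ≤ ε) :
    |Z ρ - Z σ| ≤ gFun ε +
      ε * sSup {x : ℝ | ∃ μ ν, IsState μ ∧ IsState ν ∧ x = |Z μ - Z ν|} := by
  obtain ⟨ωp, ωm, hωp, hωm, hmix⟩ := hρ.exists_add_smul_eq hσ
  have ht0 : 0 ≤ traceNorm (ρ - σ) / 2 := div_nonneg (traceNorm_nonneg _) zero_le_two
  have htε : traceNorm (ρ - σ) / 2 ≤ ε := by linarith
  set t := traceNorm (ρ - σ) / 2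
  have hconc : IsBoundedConcaveOn {μ | IsState μ} Z := .of_sum hZ
  calc |Z ρ - Z σ| ≤ gFun t + t * |Z ωp - Z ωm| :=
        hconc.abs_sub_le_gFun_add_mul hρ hσ hωp hωm ht0 hmix
    _ ≤ gFun ε + ε * sSup {x : ℝ | ∃ μ ν, IsState μ ∧ IsState ν ∧ x = |Z μ - Z ν|} := by
        gcongr
        · exact gFun_monotoneOn ht0 hε0 htε
        · exact le_csSup hbdd ⟨ωp, ωm, hωp, hωm, rfl⟩
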